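/- arXiv:1706.00831 — 2 statements merged into one kernel-verified Lean document; each statement's English description precedes it below -/
import Mathlib

section
/- The colexicographic order on finite sets of ordinals is well-founded: there is no infinite strictly decreasing sequence of finite sets of ordinals under the relation a < b iff the largest element of the symmetric difference of a and b lies in b. -/
/-!
Sending a finite set to its multiplicity function `α →₀ ℕ` turns the colex order on `Finset α`
into the colex order on finitely supported functions, which Mathlib knows to be well-founded
whenever `α` is (`Finsupp.Colex.wellFoundedLT`).
-/

/-- The colexicographic strict order on finite sets of ordinals: `a < b` iff the largest
element of the symmetric difference `(a ∪ b) \ (a ∩ b)` belongs to `b`. -/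
def colex (a b : Finset Ordinal) : Prop :=
  ∃ h : ((a ∪ b) \ (a ∩ b)).Nonempty, ((a ∪ b) \ (a ∩ b)).max' h ∈ b

open Finset Finset.Colex

open scoped symmDiff

namespace Finset.Colex

variable {α : Type*} [LinearOrder α]

theorem strictMono_toColex_toFinsupp :
    StrictMono fun s : Colex (Finset α) ↦ toColex (Multiset.toFinsupp (ofColex s).val) := by
  intro s t hst
  rw [← toColex_ofColex s, ← toColex_ofColex t, toColex_lt_toColex_iff_max'_mem] at hst
  obtain ⟨hne, hmax⟩ := hst
  set m := (ofColex s ∆ ofColex t).max' (symmDiff_nonempty.2 hne)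
  have hm : m ∉ ofColex s := fun hs ↦ (mem_symmDiff.1 (max'_mem _ _)).elim (·.2 hmax) (·.2 hs)
  refine Finsupp.Colex.lt_iff.2 ⟨m, fun j hj ↦ ?_, ?_⟩
  · have : j ∈ ofColex s ↔ j ∈ ofColex t := by
      by_contra h
      exact hj.not_ge (le_max' _ j (by rw [mem_symmDiff]; tauto))
    simp only [ofColex_toColex, Multiset.toFinsupp_apply, Multiset.count_eq_of_nodup (nodup _),
      mem_val, this]
  · simp [Multiset.toFinsupp_apply, Multiset.count_eq_of_nodup (nodup _), hm, hmax]

instance wellFoundedLT [WellFoundedLT α] : WellFoundedLT (Colex (Finset α)) :=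
  strictMono_toColex_toFinsupp.wellFoundedLT

end Finset.Colex

theorem colex_iff_toColex_lt {a b : Finset Ordinal} : colex a b ↔ toColex a < toColex b := by
  rw [colex, toColex_lt_toColex_iff_max'_mem, ← Finset.sup_eq_union, ← Finset.inf_eq_inter,
    ← symmDiff_eq_sup_sdiff_inf]
  exact ⟨fun ⟨h, hm⟩ ↦ ⟨symmDiff_nonempty.1 h, hm⟩, fun ⟨h, hm⟩ ↦ ⟨symmDiff_nonempty.2 h, hm⟩⟩

/-- The colexicographic order on finite sets of ordinals is well-founded: there is no
infinite strictly decreasing sequence. -/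
theorem colex_no_descending_sequence :
    ¬ ∃ f : ℕ → Finset Ordinal, ∀ n, colex (f (n + 1)) (f n) := by
  rintro ⟨f, hf⟩
  obtain ⟨n, hn⟩ := WellFounded.not_rel_apply_succ (r := (· < ·)) fun n ↦ toColex (f n)
  exact hn (colex_iff_toColex_lt.1 (hf n))
end

section
/- Greatest lower bounds from ACC and bounded joins: let P be a partial order with a least element ⊥ such that (i) every nonempty subset of P that has an upper bound contains a maximal element, and (ii) any two elements with a common upper bound have a least upper bound. Then every nonempty subset S of P has a greatest lower bound. -/
/-- Greatest lower bounds from ACC and bounded joins: in a partial order with a least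
element, if every nonempty subset with an upper bound has a maximal element, and any two
elements with a common upper bound have a least upper bound, then every nonempty subset
has a greatest lower bound. -/
theorem glb_of_acc_and_bounded_joins {P : Type*} [PartialOrder P] [OrderBot P]
    (hacc : ∀ C : Set P, C.Nonempty → (∃ ub, ∀ c ∈ C, c ≤ ub) →
      ∃ m ∈ C, ∀ c ∈ C, ¬ m < c)
    (hjoin : ∀ n₀ n₁ m : P, n₀ ≤ m → n₁ ≤ m →
      ∃ p, n₀ ≤ p ∧ n₁ ≤ p ∧ ∀ q, n₀ ≤ q → n₁ ≤ q → p ≤ q)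
    (S : Set P) (hS : S.Nonempty) :
    ∃ g, (∀ s ∈ S, g ≤ s) ∧ ∀ l, (∀ s ∈ S, l ≤ s) → l ≤ g := by
  obtain ⟨s₀, hs₀⟩ := hS
  set C : Set P := {x | ∀ s ∈ S, x ≤ s} with hC
  have hCne : C.Nonempty := ⟨⊥, fun s _ => bot_le⟩
  have hCub : ∃ ub, ∀ c ∈ C, c ≤ ub := ⟨s₀, fun c hc => hc s₀ hs₀⟩
  obtain ⟨m, hmC, hmax⟩ := hacc C hCne hCub
  refine ⟨m, hmC, fun l hl => ?_⟩
  obtain ⟨p, hmp, hlp, hleast⟩ := hjoin m l s₀ (hmC s₀ hs₀) (hl s₀ hs₀)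
  have hpC : p ∈ C := fun s hs => hleast s (hmC s hs) (hl s hs)
  have : p = m := by
    by_contra h
    exact hmax p hpC (lt_of_le_of_ne hmp (Ne.symm h))
  exact this ▸ hlp
end
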